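/- Let (M²,g) be a Riemannian surface and T a symmetric (1,1)-tensor field with div T = 0. Then the following are equivalent: (i) T is a Codazzi tensor field; (ii) grad t = 2 div T (equivalently grad t = 0 given div T = 0); (iii) trace T is constant. -/

import Mathlib

/-- Abstract model of the `C^∞(M)`-module of (local) vector fields on an
`m`-dimensional Riemannian manifold, equipped with an orthonormal frame `E`,
the Levi-Civita connection `D`, and the derivation action `act` of vector
fields on smooth functions `F`. -/
structure RiemannianFrame (m : ℕ) where
  F : Type
  V : Type
  [instCommRing : CommRing F]
  [instAlgebra : Algebra ℝ F]
  [instAddCommGroup : AddCommGroup V]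
  [instModule : Module F V]
  g : V → V → F
  D : V → V → V
  act : V → F → F
  bracket : V → V → V
  E : Fin m → V
  g_symm : ∀ X Y, g X Y = g Y X
  g_addl : ∀ X Y Z, g (X + Y) Z = g X Z + g Y Z
  g_smull : ∀ (f : F) (X Y : V), g (f • X) Y = f * g X Y
  act_addf : ∀ (X : V) (f h : F), act X (f + h) = act X f + act X h
  act_mulf : ∀ (X : V) (f h : F), act X (f * h) = act X f * h + f * act X h
  act_addX : ∀ (X Y : V) (f : F), act (X + Y) f = act X f + act Y f
  act_smulX : ∀ (f : F) (X : V) (h : F), act (f • X) h = f * act X h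
  act_const : ∀ (X : V) (r : ℝ), act X (algebraMap ℝ F r) = 0
  D_addX : ∀ X Y Z, D (X + Y) Z = D X Z + D Y Z
  D_smulX : ∀ (f : F) (X Y : V), D (f • X) Y = f • D X Y
  D_addY : ∀ X Y Z, D X (Y + Z) = D X Y + D X Z
  D_leibniz : ∀ (X : V) (f : F) (Y : V), D X (f • Y) = act X f • Y + f • D X Y
  metric_compat : ∀ X Y Z, act X (g Y Z) = g (D X Y) Z + g Y (D X Z)
  torsion_free : ∀ X Y, D X Y - D Y X = bracket X Y
  bracket_act : ∀ (X Y : V) (f : F),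
    act (bracket X Y) f = act X (act Y f) - act Y (act X f)
  frame_orthonormal : ∀ i j, g (E i) (E j) = if i = j then 1 else 0
  frame_span : ∀ X, X = ∑ i, g X (E i) • E i

attribute [instance] RiemannianFrame.instCommRing RiemannianFrame.instAlgebra
  RiemannianFrame.instAddCommGroup RiemannianFrame.instModule

namespace RiemannianFrame

variable {m : ℕ} (R : RiemannianFrame m)

/-- The covariant derivative `(∇_X T)(Y)` of a `(1,1)`-tensor field `T`. -/
def covT (T : R.V → R.V) (X Y : R.V) : R.V := R.D X (T Y) - T (R.D X Y)

/-- `T` is a `(1,1)`-tensor field: it is `C^∞(M)`-linear. -/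
def IsTensor (T : R.V → R.V) : Prop :=
  (∀ X Y, T (X + Y) = T X + T Y) ∧ ∀ (f : R.F) (X : R.V), T (f • X) = f • T X

/-- `T` is symmetric with respect to the metric. -/
def IsSymmT (T : R.V → R.V) : Prop := ∀ X Y, R.g (T X) Y = R.g X (T Y)

/-- `T` is a Codazzi tensor field: `(∇_X T)(Y) = (∇_Y T)(X)`. -/
def IsCodazzi (T : R.V → R.V) : Prop := ∀ X Y, R.covT T X Y = R.covT T Y X

/-- The trace of a `(1,1)`-tensor field. -/
def traceT (T : R.V → R.V) : R.F := ∑ i, R.g (T (R.E i)) (R.E i)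

/-- The divergence of a `(1,1)`-tensor field, `div T = Σᵢ (∇_{Eᵢ}T)(Eᵢ)`. -/
def divT (T : R.V → R.V) : R.V := ∑ i, R.covT T (R.E i) (R.E i)

/-- The gradient of a function. -/
def gradF (f : R.F) : R.V := ∑ i, R.act (R.E i) f • R.E i

/-- The divergence of a vector field. -/
def divV (Z : R.V) : R.F := ∑ i, R.g (R.D (R.E i) Z) (R.E i)

/-- The geometric Laplacian `Δ f = -div(grad f)`
(sign convention matching `Δ^R T = -trace ∇²T`). -/
def lapF (f : R.F) : R.F := - R.divV (R.gradF f)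

/-- The pointwise inner product `⟨T,S⟩` of two `(1,1)`-tensor fields. -/
def innerTT (T S : R.V → R.V) : R.F :=
  ∑ i, ∑ j, R.g (T (R.E i)) (R.E j) * R.g (S (R.E i)) (R.E j)

/-- The pointwise squared norm `|T|²`. -/
def normT2 (T : R.V → R.V) : R.F := R.innerTT T T

/-- The pointwise inner product `⟨∇T, ∇S⟩` of the `(0,3)`-tensors `∇T`, `∇S`. -/
def innerNabla (T S : R.V → R.V) : R.F :=
  ∑ i, R.innerTT (fun Y => R.covT T (R.E i) Y) (fun Y => R.covT S (R.E i) Y)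

/-- The pointwise squared norm `|∇T|²`. -/
def normNabla2 (T : R.V → R.V) : R.F := R.innerNabla T T

/-- The second covariant derivative `(∇²T)(X,Y,Z) = (∇_X (∇T))(Y,Z)`. -/
def nabla2 (T : R.V → R.V) (X Y Z : R.V) : R.V :=
  R.D X (R.covT T Y Z) - R.covT T (R.D X Y) Z - R.covT T Y (R.D X Z)

/-- `trace(∇²T)`, as a `(1,1)`-tensor field. -/
def traceNabla2 (T : R.V → R.V) (X : R.V) : R.V := ∑ i, R.nabla2 T (R.E i) (R.E i) X

/-- The rough Laplacian `Δ^R T = -trace ∇²T`. -/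
def roughLap (T : R.V → R.V) (X : R.V) : R.V := - R.traceNabla2 T X

/-- The curvature tensor `R(X,Y)Z = ∇_X∇_Y Z - ∇_Y∇_X Z - ∇_{[X,Y]}Z`. -/
def curv (X Y Z : R.V) : R.V :=
  R.D X (R.D Y Z) - R.D Y (R.D X Z) - R.D (R.bracket X Y) Z

/-- A function is constant iff all its directional derivatives vanish
(`M` is assumed connected). -/
def IsConst (f : R.F) : Prop := ∀ X, R.act X f = 0

end RiemannianFrame

/-- The Gaussian curvature of a surface, `K = ⟨R(E₁,E₂)E₁, E₂⟩`. -/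
def RiemannianFrame.K (R : RiemannianFrame 2) : R.F :=
  R.g (R.curv (R.E 0) (R.E 1) (R.E 0)) (R.E 1)


/-!
Differentiating `t = Σᵢ ⟨T Eᵢ, Eᵢ⟩` along `X` gives `X t = Σᵢ ⟨(∇_X T) Eᵢ, Eᵢ⟩`, because the
connection coefficients `⟨∇_X Eᵢ, Eⱼ⟩` are skew in `i, j`. For a symmetric Codazzi tensor this is
`Σᵢ ⟨X, (∇_{Eᵢ} T) Eᵢ⟩ = ⟨X, div T⟩`, so `grad t = div T` in every dimension. On a surface the
converse holds: the components `A k i j = ⟨(∇_{E_k} T) Eᵢ, Eⱼ⟩` are symmetric in `i, j`, and with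
only two indices the Codazzi defect `A 0 1 c - A 1 0 c` is, up to sign, the difference of the two
traces `Σᵢ A k i i = E_k t` and `Σᵢ A i i k = ⟨div T, E_k⟩` for the index `k ≠ c`. Hence on a surface
`T` is Codazzi iff `grad t = div T`, and when `div T = 0` all three conditions say `dt = 0`.
-/

theorem Fin.two_swap_of_symm_of_traces_eq {F : Type*} [CommRing F] (A : Fin 2 → Fin 2 → Fin 2 → F)
    (hsymm : ∀ k i j, A k i j = A k j i) (htr : ∀ k, ∑ i, A k i i = ∑ i, A i i k) (a b c : Fin 2) :
    A a b c = A b a c := by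
  simp only [Fin.sum_univ_two] at htr
  fin_cases a <;> fin_cases b <;> fin_cases c <;> simp only [Fin.zero_eta, Fin.mk_one, Fin.isValue]
  · linear_combination hsymm 0 1 0 - htr 1
  · linear_combination htr 0 - hsymm 1 0 1
  · linear_combination htr 1 - hsymm 0 1 0
  · linear_combination hsymm 1 0 1 - htr 0

namespace RiemannianFrame

variable {m : ℕ} (R : RiemannianFrame m)

def gLeft (Z : R.V) : R.V →ₗ[R.F] R.F where
  toFun X := R.g X Z
  map_add' X Y := R.g_addl X Y Z
  map_smul' f X := R.g_smull f X Z

lemma g_sum_left {ι : Type*} (s : Finset ι) (X : ι → R.V) (Z : R.V) :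
    R.g (∑ i ∈ s, X i) Z = ∑ i ∈ s, R.g (X i) Z :=
  map_sum (R.gLeft Z) X s

lemma g_sub_left (X Y Z : R.V) : R.g (X - Y) Z = R.g X Z - R.g Y Z := (R.gLeft Z).map_sub X Y

lemma g_zero_left (Z : R.V) : R.g 0 Z = 0 := (R.gLeft Z).map_zero

lemma g_smul_right (X : R.V) (f : R.F) (Y : R.V) : R.g X (f • Y) = f * R.g X Y := by
  rw [R.g_symm, R.g_smull, R.g_symm]

lemma g_sum_right {ι : Type*} (X : R.V) (s : Finset ι) (Y : ι → R.V) :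
    R.g X (∑ i ∈ s, Y i) = ∑ i ∈ s, R.g X (Y i) := by
  simp only [R.g_symm X, R.g_sum_left]

lemma g_sub_right (X Y Z : R.V) : R.g X (Y - Z) = R.g X Y - R.g X Z := by
  simp only [R.g_symm X, R.g_sub_left]

lemma g_zero_right (X : R.V) : R.g X 0 = 0 := by rw [R.g_symm, R.g_zero_left]

lemma g_sum_smul_frame (f : Fin m → R.F) (j : Fin m) : R.g (∑ i, f i • R.E i) (R.E j) = f j := by
  simp [R.g_sum_left, R.g_smull, R.frame_orthonormal]

lemma ext_frame {X Y : R.V} (h : ∀ c, R.g X (R.E c) = R.g Y (R.E c)) : X = Y := by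
  rw [R.frame_span X, R.frame_span Y]
  simp only [h]

lemma g_gradF_frame (f : R.F) (j : Fin m) : R.g (R.gradF f) (R.E j) = R.act (R.E j) f :=
  R.g_sum_smul_frame _ j

lemma act_sum {ι : Type*} (X : R.V) (s : Finset ι) (f : ι → R.F) :
    R.act X (∑ i ∈ s, f i) = ∑ i ∈ s, R.act X (f i) :=
  map_sum (AddMonoidHom.mk' (R.act X) (R.act_addf X)) f s

lemma g_D_frame_antisymm (X : R.V) (i j : Fin m) :
    R.g (R.D X (R.E i)) (R.E j) = - R.g (R.D X (R.E j)) (R.E i) := by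
  have hconst : R.act X (R.g (R.E i) (R.E j)) = 0 := by
    rw [R.frame_orthonormal]
    split_ifs
    · simpa using R.act_const X 1
    · simpa using R.act_const X 0
  rw [R.metric_compat, R.g_symm (R.E i)] at hconst
  exact eq_neg_of_add_eq_zero_left hconst

variable {R} in
def IsTensor.toLinearMap {T : R.V → R.V} (hT : R.IsTensor T) :
    R.V →ₗ[R.F] R.V where
  toFun := T
  map_add' := hT.1
  map_smul' := hT.2

variable {R} in
lemma IsTensor.map_sum {T : R.V → R.V} (hT : R.IsTensor T) {ι : Type*} (s : Finset ι)
    (X : ι → R.V) : T (∑ i ∈ s, X i) = ∑ i ∈ s, T (X i) :=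
  _root_.map_sum hT.toLinearMap X s

variable {R} in
def IsTensor.covTBilin {T : R.V → R.V} (hT : R.IsTensor T) :
    R.V →ₗ[R.F] R.V →ₗ[R.F] R.V :=
  LinearMap.mk₂ R.F (R.covT T)
    (fun X X' Y => by simp only [covT, R.D_addX, hT.1]; abel)
    (fun f X Y => by simp only [covT, R.D_smulX, hT.2, smul_sub])
    (fun X Y Y' => by simp only [covT, R.D_addY, hT.1]; abel)
    (fun f X Y => by simp only [covT, R.D_leibniz, hT.1, hT.2, smul_sub]; abel)

lemma covT_eq_sum_frame {T : R.V → R.V} (hT : R.IsTensor T) (X Y : R.V) :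
    R.covT T X Y = ∑ a, ∑ b, R.g X (R.E a) • R.g Y (R.E b) • R.covT T (R.E a) (R.E b) := by
  change hT.covTBilin X Y = ∑ a, ∑ b, R.g X (R.E a) • R.g Y (R.E b) • hT.covTBilin (R.E a) (R.E b)
  conv_lhs => rw [R.frame_span X, R.frame_span Y]
  simp only [map_sum, map_smul, LinearMap.sum_apply, LinearMap.smul_apply, Finset.smul_sum]
  rw [Finset.sum_comm]
  simp only [smul_comm (R.g Y _)]

lemma isCodazzi_of_frame {T : R.V → R.V} (hT : R.IsTensor T)
    (h : ∀ a b, R.covT T (R.E a) (R.E b) = R.covT T (R.E b) (R.E a)) : R.IsCodazzi T := by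
  intro X Y
  rw [R.covT_eq_sum_frame hT X Y, R.covT_eq_sum_frame hT Y X, Finset.sum_comm]
  exact Finset.sum_congr rfl fun a _ => Finset.sum_congr rfl fun b _ => by rw [h b a, smul_comm]

lemma g_covT_comm {T : R.V → R.V} (hTsymm : R.IsSymmT T) (X Y Z : R.V) :
    R.g (R.covT T X Y) Z = R.g Y (R.covT T X Z) := by
  have hYZ := R.metric_compat X (T Y) Z
  rw [hTsymm, R.metric_compat] at hYZ
  simp only [covT, R.g_sub_left, R.g_sub_right]
  linear_combination -hYZ - hTsymm Y (R.D X Z) - hTsymm (R.D X Y) Z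

lemma act_traceT {T : R.V → R.V} (hT : R.IsTensor T) (X : R.V) :
    R.act X (R.traceT T) = ∑ i, R.g (R.covT T X (R.E i)) (R.E i) := by
  set c : Fin m → Fin m → R.F := fun i j => R.g (R.D X (R.E i)) (R.E j)
  set a : Fin m → Fin m → R.F := fun i j => R.g (T (R.E i)) (R.E j)
  have hskew : ∑ i, (R.g (T (R.E i)) (R.D X (R.E i)) + R.g (T (R.D X (R.E i))) (R.E i)) = 0 :=
    calc _ = ∑ i, ∑ j, (c i j * a i j + c i j * a j i) := Finset.sum_congr rfl fun i _ => by
          conv_lhs => rw [R.frame_span (R.D X (R.E i))]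
          simp only [R.g_sum_right, R.g_sum_left, hT.map_sum, hT.2, R.g_smul_right, R.g_smull,
            ← Finset.sum_add_distrib]
          rfl
      _ = ∑ i, ∑ j, (c i j + c j i) * a i j := by
          simp only [Finset.sum_add_distrib, add_mul]
          rw [Finset.sum_comm (f := fun i j => c i j * a j i)]
      _ = 0 := Finset.sum_eq_zero fun i _ => Finset.sum_eq_zero fun j _ => by
          rw [show c j i = - c i j from R.g_D_frame_antisymm X j i, add_neg_cancel, zero_mul]
  have hcompat : R.act X (R.traceT T)
      = ∑ i, (R.g (R.D X (T (R.E i))) (R.E i) + R.g (T (R.E i)) (R.D X (R.E i))) := by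
    simp only [traceT, R.act_sum, R.metric_compat]
  simp only [hcompat, covT, R.g_sub_left, Finset.sum_add_distrib, Finset.sum_sub_distrib] at hskew ⊢
  linear_combination hskew

lemma act_traceT_of_isCodazzi {T : R.V → R.V} (hT : R.IsTensor T) (hTsymm : R.IsSymmT T)
    (hC : R.IsCodazzi T) (X : R.V) : R.act X (R.traceT T) = R.g X (R.divT T) := by
  rw [R.act_traceT hT, divT, R.g_sum_right]
  exact Finset.sum_congr rfl fun i _ => by rw [hC, R.g_covT_comm hTsymm]

end RiemannianFrame

lemma RiemannianFrame.isCodazzi_of_gradF_traceT_eq_divT (R : RiemannianFrame 2) {T : R.V → R.V}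
    (hT : R.IsTensor T) (hTsymm : R.IsSymmT T) (h : R.gradF (R.traceT T) = R.divT T) :
    R.IsCodazzi T := by
  refine R.isCodazzi_of_frame hT fun a b => R.ext_frame fun c => ?_
  refine Fin.two_swap_of_symm_of_traces_eq (fun k i j => R.g (R.covT T (R.E k) (R.E i)) (R.E j))
    (fun k i j => by rw [R.g_covT_comm hTsymm, R.g_symm]) (fun k => ?_) a b c
  rw [← R.act_traceT hT, ← R.g_gradF_frame, h, divT, R.g_sum_left]

/-- On a surface, for a symmetric `(1,1)`-tensor field `T` with
`div T = 0`, the following are equivalent: (i) `T` is Codazzi;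
(ii) `grad t = 2 div T` (the real form of holomorphicity of
`⟨T(∂_z),∂_z⟩`); (iii) `t = trace T` is constant. -/
theorem stmt7 (R : RiemannianFrame 2) (T : R.V → R.V)
    (hT : R.IsTensor T) (hTsymm : R.IsSymmT T)
    (hdiv : R.divT T = 0) :
    [R.IsCodazzi T,
     R.gradF (R.traceT T) = (2 : R.F) • R.divT T,
     R.IsConst (R.traceT T)].TFAE := by
  tfae_have 1 → 3 := fun hC X => by
    rw [R.act_traceT_of_isCodazzi hT hTsymm hC, hdiv, R.g_zero_right]
  tfae_have 3 → 2 := fun hconst => by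
    simp [RiemannianFrame.gradF, hconst _, hdiv]
  tfae_have 2 → 1 := fun hgrad =>
    R.isCodazzi_of_gradF_traceT_eq_divT hT hTsymm (by rw [hgrad, hdiv, smul_zero])
  tfae_finish
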